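/- arXiv:1711.02537 — 4 statements merged into one kernel-verified Lean document; each statement's English description precedes it below -/
import Mathlib

section
/- With α_{n+1} = p_{n+1}/q_{n+1}, where p_{n+1} = k·l·q·p + 1 and q_{n+1} = k·l·q², and m = (k·l)/2 (assuming k·l is even), and r = m·p mod q, one has m · α_{n+1} = r/q + 1/(2q²) modulo 1 (i.e., m·α_{n+1} − r/q − 1/(2q²) is an integer). -/
/-! Since `k l = 2 m`, the numerator `2 m q p + 1` over `2 m q²` gives
`m α = m p / q + 1 / (2 q²)`, and `m p / q - r / q` is an integer because `q ∣ m p - r`. -/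

theorem mul_div_two_mul_mul_sq {K : Type*} [Field K] [NeZero (2 : K)] {m q : K}
    (hm : m ≠ 0) (hq : q ≠ 0) (p : K) :
    m * ((2 * m * q * p + 1) / (2 * m * q ^ 2)) = m * p / q + 1 / (2 * q ^ 2) := by
  field_simp

theorem Nat.ModEq.exists_div_sub_div_eq_int {K : Type*} [Field K] [CharZero K] {q r a : ℕ}
    (hq : q ≠ 0) (h : r ≡ a [MOD q]) : ∃ z : ℤ, (a : K) / q - r / q = z := by
  obtain ⟨z, hz⟩ : (q : ℤ) ∣ (a - r : ℤ) := h.dvd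
  refine ⟨z, ?_⟩
  have hz' : (a : K) - r = q * z := by exact_mod_cast hz
  rw [← sub_div, hz', mul_div_cancel_left₀ _ (Nat.cast_ne_zero.mpr hq)]

theorem stmt_1_general (p q k l m r : ℕ) (hq : 0 < q) (hk : 0 < k) (hl : 0 < l)
    (heven : 2 ∣ k * l) (hm : m = k * l / 2) (hrq : r ≡ m * p [MOD q]) :
    ∃ z : ℤ, (m : ℚ) * ((k * l * q * p + 1 : ℕ) / (k * l * q ^ 2 : ℕ))
      - (r : ℚ) / q - 1 / (2 * q ^ 2) = z := by
  have hkl : k * l = 2 * m := by omega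
  have hm0 : (m : ℚ) ≠ 0 := by
    have : 0 < k * l := Nat.mul_pos hk hl
    exact_mod_cast (show m ≠ 0 by omega)
  obtain ⟨z, hz⟩ := hrq.exists_div_sub_div_eq_int (K := ℚ) hq.ne'
  push_cast at hz
  refine ⟨z, ?_⟩
  rw [hkl]
  push_cast
  rw [mul_div_two_mul_mul_sq hm0 (by positivity), ← hz]
  ring

theorem stmt_1 (p q k l m r : ℕ) (hp : 0 < p) (hq : 0 < q) (hk : 0 < k) (hl : 0 < l)
    (heven : 2 ∣ k * l) (hm : m = k * l / 2) (hr : r < q) (hrq : r ≡ m * p [MOD q]) :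
    ∃ z : ℤ, (m : ℚ) * ((k * l * q * p + 1 : ℕ) / (k * l * q ^ 2 : ℕ))
      - (r : ℚ) / q - 1 / (2 * q ^ 2) = z :=
  stmt_1_general p q k l m r hq hk hl heven hm hrq
end

section
/- With the same setup, (m+1) · α_{n+1} = (r+p)/q + 1/(2q²) + 1/q' modulo 1, where q' = k·l·q². -/
/-! Since `q' = 2mq²`, `α = p/q + 1/(2mq²)`, so `(m+1)α = mp/q + p/q + 1/(2q²) + 1/q'`, and
`mp ≡ r (mod q)` makes `mp/q - r/q` an integer. -/

lemma mul_add_one_mul_div_two_mul_sq {K : Type*} [Field K] [CharZero K] (m q p : K) (hm : m ≠ 0)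
    (hq : q ≠ 0) :
    (m + 1) * ((2 * m * q * p + 1) / (2 * m * q ^ 2)) =
      m * p / q + p / q + 1 / (2 * q ^ 2) + 1 / (2 * m * q ^ 2) := by
  field_simp
  ring

lemma exists_int_div_sub_div_of_modEq {a r q : ℕ} (hq : 0 < q) (h : r ≡ a [MOD q]) :
    ∃ t : ℤ, (a : ℚ) / q - r / q = t := by
  obtain ⟨t, ht⟩ : (q : ℤ) ∣ a - r := h.dvd
  refine ⟨t, ?_⟩
  have ht' : (a : ℚ) - r = q * t := by exact_mod_cast ht
  rw [← sub_div, ht']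
  field_simp

theorem stmt_2_general (p q k l m r : ℕ) (hq : 0 < q) (hk : 0 < k) (hl : 0 < l)
    (heven : 2 ∣ k * l) (hm : m = k * l / 2)
    (hrq : r ≡ m * p [MOD q]) :
    ∃ z : ℤ, ((m : ℚ) + 1) * ((k * l * q * p + 1 : ℕ) / (k * l * q ^ 2 : ℕ))
      - ((r : ℚ) + p) / q - 1 / (2 * q ^ 2) - 1 / (k * l * q ^ 2 : ℕ) = z := by
  have hkl : k * l = 2 * m := by omega
  have hm0 : (m : ℚ) ≠ 0 := Nat.cast_ne_zero.mpr (by have := Nat.mul_pos hk hl; omega)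
  obtain ⟨t, ht⟩ := exists_int_div_sub_div_of_modEq hq hrq
  push_cast at ht
  refine ⟨t, ?_⟩
  push_cast [hkl]
  rw [mul_add_one_mul_div_two_mul_sq _ _ _ hm0 (by positivity), ← ht, add_div]
  ring

theorem stmt_2 (p q k l m r : ℕ) (hp : 0 < p) (hq : 0 < q) (hk : 0 < k) (hl : 0 < l)
    (heven : 2 ∣ k * l) (hco : Nat.Coprime p q) (hm : m = k * l / 2) (hr : r < q)
    (hrq : r ≡ m * p [MOD q]) :
    ∃ z : ℤ, ((m : ℚ) + 1) * ((k * l * q * p + 1 : ℕ) / (k * l * q ^ 2 : ℕ))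
      - ((r : ℚ) + p) / q - 1 / (2 * q ^ 2) - 1 / (k * l * q ^ 2 : ℕ) = z :=
  stmt_2_general p q k l m r hq hk hl heven hm hrq
end

section
/- Let T admit a good cyclic approximation, i.e., there exist cyclic towers with single tower of height h_n, partitions ξ_n → ε (converging to the decomposition into points), and ∑_{c∈ξ_n} μ(T(c) Δ σ_n(c)) = o(1/h_n). Then T is ergodic. -/
open MeasureTheory Filter ENNReal

/-- `T` admits a good cyclic approximation: there are single towers of heights `h n`
(disjoint levels of equal measure `1/h n` covering the space), whose levels generate
the full σ-algebra in measure (`ξ_n → ε`), and the cyclic permutation `σ_n`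
(sending level `i` to level `i+1 mod h n`) approximates `T` with speed `o(1/h n)`. -/
def GoodCyclicApproximation {X : Type*} [MeasurableSpace X] (μ : Measure X)
    (T : X → X) : Prop :=
  ∃ (h : ℕ → ℕ) (c : ℕ → ℕ → Set X),
    (∀ n, 0 < h n) ∧
    Tendsto h atTop atTop ∧
    (∀ n i, i < h n → MeasurableSet (c n i)) ∧
    (∀ n i j, i < h n → j < h n → i ≠ j → Disjoint (c n i) (c n j)) ∧
    (∀ n i, i < h n → μ (c n i) = 1 / (h n : ℝ≥0∞)) ∧
    -- ξ_n → ε : every measurable set is approximated by unions of levels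
    (∀ A : Set X, MeasurableSet A → ∀ ε : ℝ, 0 < ε → ∀ᶠ n in atTop,
      ∃ s : Finset ℕ, (μ (symmDiff A (⋃ i ∈ s.filter (· < h n), c n i))).toReal < ε) ∧
    -- speed of approximation o(1/h n)
    Tendsto
      (fun n => (h n : ℝ) *
        ∑ i ∈ Finset.range (h n), (μ (symmDiff (T '' c n i) (c n ((i + 1) % h n)))).toReal)
      atTop (nhds 0)

/-! An invariant set `A` meets consecutive levels of a tower in almost the same measure: `T` carries
`A ∩ c i` onto `A ∩ T '' c i`, and `T '' c i` is close to `c (i + 1)`. Summing these defects along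
the tower, every `μ (A ∩ c i)` lies within `o(1 / h)` of `μ (A ∩ c 0)`. A union of levels `U` misses
in each level `c i` either `A ∩ c i` or `c i \ A`, so `μ (A ∆ U) ≥ min x (1 - x) - o(1)` with
`x = h μ (A ∩ c 0) = μ A + o(1)`. As such `U` approximate `A` arbitrarily well, `μ A ∈ {0, 1}`. -/

open Finset Function
open scoped symmDiff

section InvariantSets

variable {X : Type*} [MeasurableSpace X] {μ : Measure X} {T S : X → X} {A B : Set X}

theorem measure_inter_image_of_preimage_eq (hS : MeasurePreserving S μ μ) (hST : LeftInverse S T)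
    (hTS : RightInverse S T) (hinv : T ⁻¹' A = A) (hAB : MeasurableSet (A ∩ B)) :
    μ (A ∩ T '' B) = μ (A ∩ B) := by
  have hSA : S ⁻¹' A = A := by
    conv_lhs => rw [← hinv, ← Set.preimage_comp, hTS.comp_eq_id, Set.preimage_id]
  calc μ (A ∩ T '' B) = μ (S ⁻¹' (A ∩ B)) := by
        rw [Set.preimage_inter, hSA, Set.image_eq_preimage_of_inverse hST hTS]
    _ = μ (A ∩ B) := hS.measure_preimage hAB.nullMeasurableSet

end InvariantSets

section Levels

variable {X ι : Type*} [MeasurableSpace X] {μ : Measure X} {c : ι → Set X} {I : Finset ι}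
  {A : Set X}

theorem sum_min_measureReal_le_measureReal_symmDiff_biUnion [IsFiniteMeasure μ]
    (hd : (I : Set ι).PairwiseDisjoint c) (hc : ∀ i ∈ I, MeasurableSet (c i))
    (hA : MeasurableSet A) {t : Finset ι} (ht : t ⊆ I) :
    ∑ i ∈ I, min (μ.real (A ∩ c i)) (μ.real (c i \ A)) ≤ μ.real (A ∆ ⋃ i ∈ t, c i) := by
  set U := ⋃ i ∈ t, c i
  have hU : MeasurableSet U := t.measurableSet_biUnion fun i hi => hc i (ht hi)
  have hmin : ∀ i ∈ I, min (μ.real (A ∩ c i)) (μ.real (c i \ A)) ≤ μ.real ((A ∆ U) ∩ c i) := by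
    intro i hi
    by_cases hit : i ∈ t
    · have hcU : c i ⊆ U := Set.subset_biUnion_of_mem (u := c) hit
      refine (min_le_right _ _).trans (measureReal_mono fun x hx => ⟨?_, hx.1⟩)
      exact Set.mem_symmDiff.2 (Or.inr ⟨hcU hx.1, hx.2⟩)
    · have hcU : Disjoint (c i) U := Set.disjoint_iUnion₂_right.2 fun j hj =>
        hd hi (ht hj) (ne_of_mem_of_not_mem hj hit).symm
      refine (min_le_left _ _).trans (measureReal_mono fun x hx => ⟨?_, hx.2⟩)
      exact Set.mem_symmDiff.2 (Or.inl ⟨hx.1, hcU.notMem_of_mem_left hx.2⟩)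
  calc ∑ i ∈ I, min (μ.real (A ∩ c i)) (μ.real (c i \ A))
      ≤ ∑ i ∈ I, μ.real ((A ∆ U) ∩ c i) := sum_le_sum hmin
    _ = μ.real (⋃ i ∈ I, (A ∆ U) ∩ c i) :=
        (measureReal_biUnion_finset (hd.mono fun _ => Set.inter_subset_right)
          fun i hi => (hA.symmDiff hU).inter (hc i hi)).symm
    _ ≤ μ.real (A ∆ U) := measureReal_mono (Set.iUnion₂_subset fun _ _ => Set.inter_subset_left)

theorem measureReal_eq_sum_inter [IsProbabilityMeasure μ] (hd : (I : Set ι).PairwiseDisjoint c)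
    (hc : ∀ i ∈ I, MeasurableSet (c i)) (hcover : μ (⋃ i ∈ I, c i) = 1) (hA : MeasurableSet A) :
    μ.real A = ∑ i ∈ I, μ.real (A ∩ c i) := by
  have hnull : μ (⋃ i ∈ I, c i)ᶜ = 0 :=
    (prob_compl_eq_zero_iff (I.measurableSet_biUnion hc)).2 hcover
  rw [← measureReal_biUnion_finset (hd.mono fun _ => Set.inter_subset_right)
    fun i hi => hA.inter (hc i hi), ← Set.inter_iUnion₂, measureReal_def, measureReal_def,
    measure_inter_conull hnull]

end Levels

theorem min_sum_le_sum_min_add {H : ℕ} (hH : 0 < H) (y : ℕ → ℝ) {δ : ℝ}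
    (hy : ∀ i < H, |y i - y 0| ≤ δ) :
    min (∑ i ∈ range H, y i) (1 - ∑ i ∈ range H, y i)
      ≤ ∑ i ∈ range H, min (y i) (1 / H - y i) + 2 * H * δ := by
  have hH' : (0 : ℝ) < H := by exact_mod_cast hH
  have hy' : ∀ i ∈ range H, |y i - y 0| ≤ δ := fun i hi => hy i (mem_range.1 hi)
  have hsum : |∑ i ∈ range H, y i - H * y 0| ≤ H * δ := by
    calc |∑ i ∈ range H, y i - H * y 0| = |∑ i ∈ range H, (y i - y 0)| := by
          rw [sum_sub_distrib, sum_const, card_range, nsmul_eq_mul]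
      _ ≤ ∑ i ∈ range H, |y i - y 0| := abs_sum_le_sum_abs _ _
      _ ≤ ∑ _i ∈ range H, δ := sum_le_sum hy'
      _ = H * δ := by rw [sum_const, card_range, nsmul_eq_mul]
  have hmin : min (H * y 0) (1 - H * y 0) - H * δ ≤ ∑ i ∈ range H, min (y i) (1 / H - y i) := by
    have hterm : ∀ i ∈ range H, min (y 0) (1 / H - y 0) - δ ≤ min (y i) (1 / H - y i) := by
      intro i hi
      obtain ⟨hlo, hhi⟩ := abs_le.1 (hy' i hi)
      rw [sub_le_iff_le_add, ← min_add_add_right]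
      exact min_le_min (by linarith) (by linarith)
    calc min (H * y 0) (1 - H * y 0) - H * δ
        = ∑ _i ∈ range H, (min (y 0) (1 / H - y 0) - δ) := by
          rw [sum_const, card_range, nsmul_eq_mul, mul_sub, mul_min_of_nonneg _ _ hH'.le,
            mul_sub, mul_one_div_cancel hH'.ne']
      _ ≤ _ := sum_le_sum hterm
  obtain ⟨hsum_lo, hsum_hi⟩ := abs_le.1 hsum
  calc min (∑ i ∈ range H, y i) (1 - ∑ i ∈ range H, y i)
      ≤ min (H * y 0 + H * δ) (1 - H * y 0 + H * δ) := min_le_min (by linarith) (by linarith)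
    _ = min (H * y 0) (1 - H * y 0) + H * δ := min_add_add_right _ _ _
    _ ≤ _ := by linarith

theorem eventuallyConst_ae_of_min_measureReal_nonpos {X : Type*} [MeasurableSpace X]
    {μ : Measure X} [IsProbabilityMeasure μ] {A : Set X} (hA : MeasurableSet A)
    (h : min (μ.real A) (1 - μ.real A) ≤ 0) : EventuallyConst A (ae μ) := by
  rw [eventuallyConst_set', ae_eq_empty, ae_eq_univ, ← measureReal_eq_zero_iff,
    ← measureReal_eq_zero_iff, measureReal_compl hA, probReal_univ]
  rcases min_le_iff.1 h with h0 | h1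
  · exact Or.inl (le_antisymm h0 measureReal_nonneg)
  · exact Or.inr (by linarith [measureReal_le_one (μ := μ) (s := A)])

section Tower

variable {X : Type*} [MeasurableSpace X] {μ : Measure X} {T S : X → X} {H : ℕ} {c : ℕ → Set X}
  {A : Set X}

theorem abs_measureReal_inter_sub_le_sum [IsFiniteMeasure μ] (hS : MeasurePreserving S μ μ)
    (hST : LeftInverse S T) (hTS : RightInverse S T) (hinv : T ⁻¹' A = A) (hA : MeasurableSet A)
    (hc : ∀ i < H, MeasurableSet (c i)) {i : ℕ} (hi : i < H) :
    |μ.real (A ∩ c i) - μ.real (A ∩ c 0)|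
      ≤ ∑ l ∈ range H, μ.real ((T '' c l) ∆ c ((l + 1) % H)) := by
  have hstep : ∀ {l}, 0 ≤ l → l < i →
      dist (μ.real (A ∩ c l)) (μ.real (A ∩ c (l + 1))) ≤ μ.real ((T '' c l) ∆ c ((l + 1) % H)) := by
    intro l _ hl
    have hTc : MeasurableSet (T '' c l) := by
      rw [Set.image_eq_preimage_of_inverse hST hTS]
      exact hS.measurable (hc l (by omega))
    have hshift : μ.real (A ∩ T '' c l) = μ.real (A ∩ c l) := congrArg ENNReal.toReal
      (measure_inter_image_of_preimage_eq hS hST hTS hinv (hA.inter (hc l (by omega))))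
    rw [Nat.mod_eq_of_lt (by omega : l + 1 < H), Real.dist_eq, ← hshift]
    calc _ ≤ μ.real ((A ∩ T '' c l) ∆ (A ∩ c (l + 1))) :=
          abs_measureReal_sub_le_measureReal_symmDiff (hA.inter hTc).nullMeasurableSet
            (hA.inter (hc _ (by omega))).nullMeasurableSet
      _ ≤ _ := by
          rw [← Set.inter_symmDiff_distrib_left]
          exact measureReal_mono Set.inter_subset_right
  rw [abs_sub_comm, ← Real.dist_eq]
  calc _ ≤ ∑ l ∈ Ico 0 i, μ.real ((T '' c l) ∆ c ((l + 1) % H)) :=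
        dist_le_Ico_sum_of_dist_le i.zero_le hstep
    _ ≤ _ := sum_le_sum_of_subset_of_nonneg (fun l hl => mem_range.2 ((mem_Ico.1 hl).2.trans hi))
        fun _ _ _ => measureReal_nonneg

theorem min_measureReal_le_of_preimage_eq [IsProbabilityMeasure μ] (hH : 0 < H)
    (hc : ∀ i < H, MeasurableSet (c i)) (hd : (range H : Set ℕ).PairwiseDisjoint c)
    (hμc : ∀ i < H, μ (c i) = 1 / H) (hS : MeasurePreserving S μ μ) (hST : LeftInverse S T)
    (hTS : RightInverse S T) (hinv : T ⁻¹' A = A) (hA : MeasurableSet A) {t : Finset ℕ}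
    (ht : t ⊆ range H) :
    min (μ.real A) (1 - μ.real A)
      ≤ μ.real (A ∆ ⋃ i ∈ t, c i)
        + 2 * H * ∑ l ∈ range H, μ.real ((T '' c l) ∆ c ((l + 1) % H)) := by
  have hc' : ∀ i ∈ range H, MeasurableSet (c i) := fun i hi => hc i (mem_range.1 hi)
  have hcover : μ (⋃ i ∈ range H, c i) = 1 := by
    rw [measure_biUnion_finset hd hc', sum_congr rfl fun i hi => hμc i (mem_range.1 hi),
      sum_const, card_range, nsmul_eq_mul, mul_one_div,
      ENNReal.div_self (by exact_mod_cast hH.ne') (natCast_ne_top H)]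
  have hcomp : ∀ i ∈ range H, 1 / (H : ℝ) - μ.real (A ∩ c i) = μ.real (c i \ A) := by
    intro i hi
    have hsplit := measureReal_sdiff_add_inter (μ := μ) (s := c i) hA
    have hci : μ.real (c i) = 1 / H := by simp [measureReal_def, hμc i (mem_range.1 hi)]
    rw [Set.inter_comm, hci] at hsplit
    linarith
  rw [measureReal_eq_sum_inter hd hc' hcover hA]
  calc _ ≤ ∑ i ∈ range H, min (μ.real (A ∩ c i)) (1 / H - μ.real (A ∩ c i))
          + 2 * H * ∑ l ∈ range H, μ.real ((T '' c l) ∆ c ((l + 1) % H)) :=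
        min_sum_le_sum_min_add hH _ fun i hi =>
          abs_measureReal_inter_sub_le_sum hS hST hTS hinv hA hc hi
    _ ≤ _ := by
        gcongr ?_ + _
        rw [sum_congr rfl fun i hi => congrArg _ (hcomp i hi)]
        exact sum_min_measureReal_le_measureReal_symmDiff_biUnion hd hc' hA ht

end Tower

theorem stmt_10 {X : Type*} [MeasurableSpace X] (μ : Measure X) [IsProbabilityMeasure μ]
    (T S : X → X) (hT : MeasurePreserving T μ μ) (hS : MeasurePreserving S μ μ)
    (hST : Function.LeftInverse S T) (hTS : Function.RightInverse S T)
    (happrox : GoodCyclicApproximation μ T) :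
    Ergodic T μ := by
  obtain ⟨h, c, hpos, -, hc, hd, hμc, happ, hspeed⟩ := happrox
  refine ⟨hT, ⟨fun A hA hinv => eventuallyConst_ae_of_min_measureReal_nonpos hA ?_⟩⟩
  refine le_of_forall_pos_lt_add fun ε hε => ?_
  obtain ⟨n, ⟨s, hs⟩, hn⟩ := ((happ A hA (ε / 3) (by positivity)).and
    (hspeed.eventually (gt_mem_nhds (by positivity : (0 : ℝ) < ε / 3)))).exists
  have hdn : (range (h n) : Set ℕ).PairwiseDisjoint (c n) := fun i hi j hj hij =>
    hd n i j (by simpa using hi) (by simpa using hj) hij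
  have hbound := min_measureReal_le_of_preimage_eq (hpos n) (hc n) hdn (hμc n) hS hST hTS hinv hA
    (t := s.filter (· < h n)) fun i hi => mem_range.2 (mem_filter.1 hi).2
  simp only [← measureReal_def] at hs hn
  linarith
end

section
/- If an ergodic measure-preserving transformation T admits a good approximation of type (h, h+1) (two substantial towers of heights h_n and h_n+1 with approximation speed o(1/h_n)), then T has continuous spectrum, i.e., U_T has no eigenfunctions in L²₀(X,μ) other than 0. -/
open MeasureTheory Filter ENNReal

/-- `T` admits a good approximation of type `(h, h+1)`: for each `n` there are two
towers, with levels `c₁ n i` (`i < h n`) and `c₂ n i` (`i < h n + 1`), all levels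
pairwise disjoint, levels of equal measure within each tower, both towers substantial
(`height × base-measure ≥ r > 0`), the partitions into levels converge to the
decomposition into points, and the cyclic permutations of the two towers approximate
`T` with speed `o(1/h n)`. -/
def GoodApproximationTypeHH1 {X : Type*} [MeasurableSpace X] (μ : Measure X)
    (T : X → X) : Prop :=
  ∃ (h : ℕ → ℕ) (c₁ c₂ : ℕ → ℕ → Set X) (r : ℝ),
    0 < r ∧
    (∀ n, 0 < h n) ∧
    Tendsto h atTop atTop ∧
    (∀ n i, i < h n → MeasurableSet (c₁ n i)) ∧
    (∀ n i, i < h n + 1 → MeasurableSet (c₂ n i)) ∧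
    (∀ n i j, i < h n → j < h n → i ≠ j → Disjoint (c₁ n i) (c₁ n j)) ∧
    (∀ n i j, i < h n + 1 → j < h n + 1 → i ≠ j → Disjoint (c₂ n i) (c₂ n j)) ∧
    (∀ n i j, i < h n → j < h n + 1 → Disjoint (c₁ n i) (c₂ n j)) ∧
    (∀ n i j, i < h n → j < h n → μ (c₁ n i) = μ (c₁ n j)) ∧
    (∀ n i j, i < h n + 1 → j < h n + 1 → μ (c₂ n i) = μ (c₂ n j)) ∧
    -- substantial towers
    (∀ n, (r : ℝ) ≤ (h n : ℝ) * (μ (c₁ n 0)).toReal) ∧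
    (∀ n, (r : ℝ) ≤ ((h n : ℝ) + 1) * (μ (c₂ n 0)).toReal) ∧
    -- ξ_n → ε
    (∀ A : Set X, MeasurableSet A → ∀ ε : ℝ, 0 < ε → ∀ᶠ n in atTop,
      ∃ s₁ s₂ : Finset ℕ,
        (μ (symmDiff A ((⋃ i ∈ s₁.filter (· < h n), c₁ n i) ∪
          (⋃ i ∈ s₂.filter (· < h n + 1), c₂ n i)))).toReal < ε) ∧
    -- speed of approximation o(1/h n)
    Tendsto
      (fun n => (h n : ℝ) *
        ((∑ i ∈ Finset.range (h n),
            (μ (symmDiff (T '' c₁ n i) (c₁ n ((i + 1) % h n)))).toReal) +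
          ∑ i ∈ Finset.range (h n + 1),
            (μ (symmDiff (T '' c₂ n i) (c₂ n ((i + 1) % (h n + 1))))).toReal))
      atTop (nhds 0)

/-!
Let `f ∘ T = c • f` with `∫ f = 0` and `f ≠ 0`. Ergodicity gives `‖c‖ = 1`, `c ≠ 1`, and
`‖f‖ = L > 0` almost everywhere. On a tower of height `m` whose levels `T` maps to the next
one up to a total error `δ`, the level integrals `I i = ∫ x in d i, f x` satisfy
`c * I i ≈ I (i + 1)`, and going around the cycle gives `‖c ^ m - 1‖ * ∑ ‖I i‖ ≲ m L δ`.
Because the levels eventually resolve the finitely many sets on which `f` stays close to a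
fixed value of modulus `L`, `∑ ‖I i‖` is at least about `L / 2` times the measure `r` of the
tower. Approximation speed `o(1 / h)` therefore forces `c ^ h → 1` and `c ^ (h + 1) → 1`, so
`c = 1`.
-/

section Cycle

open Finset

variable {𝕜 : Type*} [NormedField 𝕜] {c : 𝕜}

theorem norm_pow_mul_sub_le_sum (hc : ‖c‖ ≤ 1) (I : ℕ → 𝕜) {m k : ℕ} (hk : k ≤ m) :
    ‖c ^ k * I 0 - I (k % m)‖ ≤ ∑ j ∈ range k, ‖c * I j - I ((j + 1) % m)‖ := by
  induction k with
  | zero => simp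
  | succ k ih =>
    have hkm : k % m = k := Nat.mod_eq_of_lt hk
    calc ‖c ^ (k + 1) * I 0 - I ((k + 1) % m)‖
        = ‖c * (c ^ k * I 0 - I (k % m)) + (c * I k - I ((k + 1) % m))‖ := by
          rw [hkm, pow_succ']; congr 1; ring
      _ ≤ ‖c‖ * ‖c ^ k * I 0 - I (k % m)‖ + ‖c * I k - I ((k + 1) % m)‖ :=
          (norm_add_le _ _).trans_eq (by rw [norm_mul])
      _ ≤ ∑ j ∈ range (k + 1), ‖c * I j - I ((j + 1) % m)‖ := by
          rw [sum_range_succ]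
          gcongr
          exact (mul_le_of_le_one_left (norm_nonneg _) hc).trans (ih (by omega))

theorem norm_pow_sub_one_mul_le (hc : ‖c‖ ≤ 1) (I : ℕ → 𝕜) {m i : ℕ} (hi : i < m) :
    ‖(c ^ m - 1) * I i‖ ≤ 3 * ∑ j ∈ range m, ‖c * I j - I ((j + 1) % m)‖ := by
  set E := ∑ j ∈ range m, ‖c * I j - I ((j + 1) % m)‖
  set D : ℕ → 𝕜 := fun k => c ^ k * I 0 - I (k % m) with hD
  have hDle : ∀ k ≤ m, ‖D k‖ ≤ E := fun k hk =>
    (norm_pow_mul_sub_le_sum hc I hk).trans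
      (sum_le_sum_of_subset_of_nonneg (range_subset_range.2 hk) fun _ _ _ => norm_nonneg _)
  have hpow : ∀ k, ‖c ^ k‖ ≤ 1 := fun k => by rw [norm_pow]; exact pow_le_one₀ (norm_nonneg _) hc
  have key : (c ^ m - 1) * I i = c ^ i * D m - c ^ m * D i + D i := by
    simp only [hD, Nat.mod_self, Nat.mod_eq_of_lt hi]
    ring
  calc ‖(c ^ m - 1) * I i‖ ≤ ‖c ^ i‖ * ‖D m‖ + ‖c ^ m‖ * ‖D i‖ + ‖D i‖ := by
        rw [key, ← norm_mul, ← norm_mul]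
        exact (norm_add_le _ _).trans (add_le_add_left (norm_sub_le _ _) _)
    _ ≤ 1 * E + 1 * E + E := by
        gcongr
        exacts [hpow i, hDle m le_rfl, hpow m, hDle i hi.le, hDle i hi.le]
    _ = 3 * E := by ring

theorem norm_sub_one_le_norm_pow_succ_sub_one_add (hc : ‖c‖ = 1) (k : ℕ) :
    ‖c - 1‖ ≤ ‖c ^ (k + 1) - 1‖ + ‖c ^ k - 1‖ :=
  calc ‖c - 1‖ = ‖(c ^ (k + 1) - 1) - (c ^ k - 1)‖ := by
        rw [show (c ^ (k + 1) - 1) - (c ^ k - 1) = c ^ k * (c - 1) by ring, norm_mul, norm_pow,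
          hc, one_pow, one_mul]
    _ ≤ ‖c ^ (k + 1) - 1‖ + ‖c ^ k - 1‖ := norm_sub_le _ _

end Cycle

section SetIntegral

variable {X E : Type*} [MeasurableSpace X] {μ : Measure X} [IsFiniteMeasure μ]
  [NormedAddCommGroup E] [NormedSpace ℝ E] {F : X → E} {L : ℝ}

theorem norm_setIntegral_sub_setIntegral_le (hF : Integrable F μ) (hFL : ∀ᵐ x ∂μ, ‖F x‖ ≤ L)
    {A B : Set X} (hA : MeasurableSet A) (hB : MeasurableSet B) :
    ‖∫ x in A, F x ∂μ - ∫ x in B, F x ∂μ‖ ≤ L * μ.real (symmDiff A B) := by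
  rw [← integral_indicator hA, ← integral_indicator hB,
    ← integral_sub (hF.indicator hA) (hF.indicator hB), mul_comm, ← smul_eq_mul,
    ← integral_indicator_const L (hA.symmDiff hB)]
  refine norm_integral_le_of_norm_le ((integrable_const L).indicator (hA.symmDiff hB)) ?_
  filter_upwards [hFL] with x hx
  by_cases hxA : x ∈ A <;> by_cases hxB : x ∈ B <;>
    simp [Set.indicator, Set.mem_symmDiff, hxA, hxB, hx]

theorem le_norm_setIntegral [CompleteSpace E] (hF : Integrable F μ) (hFL : ∀ᵐ x ∂μ, ‖F x‖ ≤ L)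
    {η : ℝ} (hη : 0 ≤ η) {g : E} (hg : ‖g‖ = L) {D B : Set X} (hB : MeasurableSet B)
    (hFg : ∀ᵐ x ∂μ, x ∈ D → x ∉ B → ‖F x - g‖ ≤ η * L) :
    (1 - η) * L * μ.real D - 2 * L * μ.real (D ∩ B) ≤ ‖∫ x in D, F x ∂μ‖ := by
  have hL : 0 ≤ L := hg ▸ norm_nonneg g
  set R := (∫ x in D ∩ B, F x - g ∂μ) + ∫ x in D \ B, F x - g ∂μ with hR
  have hsplit : ∫ x in D, F x ∂μ = μ.real D • g + R := by
    rw [hR, integral_inter_add_sdiff (f := fun x => F x - g) hB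
        ((hF.sub (integrable_const g)).integrableOn),
      integral_sub hF.integrableOn (integrableOn_const (measure_ne_top _ _)),
      setIntegral_const]
    abel
  have hin : ‖∫ x in D ∩ B, F x - g ∂μ‖ ≤ 2 * L * μ.real (D ∩ B) := by
    refine norm_setIntegral_le_of_norm_le_const_ae' (measure_lt_top _ _) ?_
    filter_upwards [hFL] with x hx _
    linarith [norm_sub_le (F x) g]
  have hout : ‖∫ x in D \ B, F x - g ∂μ‖ ≤ η * L * μ.real (D \ B) := by
    refine norm_setIntegral_le_of_norm_le_const_ae' (measure_lt_top _ _) ?_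
    filter_upwards [hFg] with x hx hxD using hx hxD.1 hxD.2
  have hDB : η * L * μ.real (D \ B) ≤ η * L * μ.real D :=
    mul_le_mul_of_nonneg_left (measureReal_mono Set.sdiff_subset) (mul_nonneg hη hL)
  calc (1 - η) * L * μ.real D - 2 * L * μ.real (D ∩ B)
      ≤ μ.real D * L - (2 * L * μ.real (D ∩ B) + η * L * μ.real (D \ B)) := by linarith
    _ ≤ ‖μ.real D • g‖ - ‖R‖ := by
        rw [norm_smul, hg, Real.norm_of_nonneg measureReal_nonneg]
        gcongr
        exact (norm_add_le _ _).trans (add_le_add hin hout)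
    _ ≤ ‖∫ x in D, F x ∂μ‖ := hsplit ▸ norm_sub_le_norm_add _ _

end SetIntegral

section Tower

open Finset

theorem subset_or_disjoint_biUnion_union {X ι : Type*} {P : ι → Set X} {s : Finset ι} {Y : Set X}
    {i : ι} (hP : ∀ j ∈ s, j ≠ i → Disjoint (P i) (P j)) (hY : Disjoint (P i) Y) :
    P i ⊆ (⋃ j ∈ s, P j) ∪ Y ∨ Disjoint (P i) ((⋃ j ∈ s, P j) ∪ Y) := by
  by_cases hi : i ∈ s
  · exact .inl ((Set.subset_biUnion_of_mem (u := P) hi).trans Set.subset_union_left)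
  · exact .inr (Set.disjoint_union_right.2
      ⟨Set.disjoint_iUnion₂_right.2 fun j hj => hP j hj fun hji => hi (hji ▸ hj), hY⟩)

variable {X : Type*} [MeasurableSpace X] {μ : Measure X}

theorem sum_range_measureReal_eq {d : ℕ → Set X} {m : ℕ} (hd : ∀ i < m, μ (d i) = μ (d 0)) :
    ∑ i ∈ range m, μ.real (d i) = m * μ.real (d 0) := by
  simp only [measureReal_def]
  rw [sum_congr rfl fun i hi => congrArg ENNReal.toReal (hd i (mem_range.1 hi)), sum_const,
    card_range, nsmul_eq_mul]

theorem eventually_exists_subset_or_disjoint_approx {P Q : ℕ → ℕ → Set X} {p q : ℕ → ℕ}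
    (hPm : ∀ n i, i < p n → MeasurableSet (P n i)) (hQm : ∀ n i, i < q n → MeasurableSet (Q n i))
    (hPP : ∀ n i j, i < p n → j < p n → i ≠ j → Disjoint (P n i) (P n j))
    (hPQ : ∀ n i j, i < p n → j < q n → Disjoint (P n i) (Q n j))
    (happ : ∀ A : Set X, MeasurableSet A → ∀ ε : ℝ, 0 < ε → ∀ᶠ n in atTop,
      ∃ s₁ s₂ : Finset ℕ, μ.real (symmDiff A ((⋃ i ∈ s₁.filter (· < p n), P n i) ∪
        (⋃ i ∈ s₂.filter (· < q n), Q n i))) < ε)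
    (A : Set X) (hA : MeasurableSet A) (ε : ℝ) (hε : 0 < ε) :
    ∀ᶠ n in atTop, ∃ S, MeasurableSet S ∧ (∀ i < p n, P n i ⊆ S ∨ Disjoint (P n i) S) ∧
      μ.real (symmDiff A S) < ε := by
  filter_upwards [happ A hA ε hε] with n ⟨s₁, s₂, hs⟩
  refine ⟨_, ?_, fun i hi => subset_or_disjoint_biUnion_union (fun j hj hji => ?_) ?_, hs⟩
  · exact (Finset.measurableSet_biUnion _ fun i hi => hPm n i (mem_filter.1 hi).2).union
      (Finset.measurableSet_biUnion _ fun i hi => hQm n i (mem_filter.1 hi).2)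
  · exact hPP n i j hi (mem_filter.1 hj).2 hji.symm
  · exact Set.disjoint_iUnion₂_right.2 fun j hj => hPQ n i j hi (mem_filter.1 hj).2

variable [IsFiniteMeasure μ] {d : ℕ → Set X} {m : ℕ}

theorem norm_pow_sub_one_mul_sum_le {T : X → X} (hT : MeasurableEmbedding T) {F : X → ℂ}
    {L : ℝ} (hF : Integrable F μ) (hFL : ∀ᵐ x ∂μ, ‖F x‖ ≤ L) {c : ℂ} (hc : ‖c‖ ≤ 1)
    (himg : ∀ s, ∫ x in T '' s, F x ∂μ = c * ∫ x in s, F x ∂μ)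
    (hd : ∀ i < m, MeasurableSet (d i)) :
    ‖c ^ m - 1‖ * ∑ i ∈ range m, ‖∫ x in d i, F x ∂μ‖ ≤
      3 * m * L * ∑ j ∈ range m, μ.real (symmDiff (T '' d j) (d ((j + 1) % m))) := by
  set I : ℕ → ℂ := fun i => ∫ x in d i, F x ∂μ
  have hcycle : ∑ j ∈ range m, ‖c * I j - I ((j + 1) % m)‖ ≤
      L * ∑ j ∈ range m, μ.real (symmDiff (T '' d j) (d ((j + 1) % m))) := by
    rw [mul_sum]
    refine sum_le_sum fun j hj => ?_
    have hj : j < m := mem_range.1 hj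
    rw [← himg]
    exact norm_setIntegral_sub_setIntegral_le hF hFL (hT.measurableSet_image.2 (hd j hj))
      (hd _ (Nat.mod_lt _ (by omega)))
  calc ‖c ^ m - 1‖ * ∑ i ∈ range m, ‖I i‖
      = ∑ i ∈ range m, ‖(c ^ m - 1) * I i‖ := by simp only [mul_sum, norm_mul]
    _ ≤ ∑ _i ∈ range m, 3 * (L * ∑ j ∈ range m,
          μ.real (symmDiff (T '' d j) (d ((j + 1) % m)))) :=
        sum_le_sum fun i hi =>
          (norm_pow_sub_one_mul_le hc I (mem_range.1 hi)).trans (by gcongr)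
    _ = 3 * m * L * ∑ j ∈ range m, μ.real (symmDiff (T '' d j) (d ((j + 1) % m))) := by
        rw [sum_const, card_range, nsmul_eq_mul]
        ring

variable {E : Type*} [NormedAddCommGroup E] [NormedSpace ℝ E] [CompleteSpace E] {F : X → E}
  {L η : ℝ}

theorem le_sum_norm_setIntegral (hF : Integrable F μ) (hL : 0 ≤ L) (hFL : ∀ᵐ x ∂μ, ‖F x‖ ≤ L)
    (hη : 0 ≤ η) {Z : Finset E} (hZ : ∀ z ∈ Z, ‖z‖ = L) {A S : E → Set X}
    (hcover : ∀ᵐ x ∂μ, ∃ z ∈ Z, x ∈ A z) (hA : ∀ z ∈ Z, ∀ x ∈ A z, ‖F x - z‖ ≤ η * L)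
    {B : Set X} (hB : MeasurableSet B) (hAS : ∀ z ∈ Z, symmDiff (A z) (S z) ⊆ B)
    (hd : ∀ i < m, MeasurableSet (d i))
    (hdisj : ∀ i j, i < m → j < m → i ≠ j → Disjoint (d i) (d j))
    (hsat : ∀ z ∈ Z, ∀ i < m, d i ⊆ S z ∨ Disjoint (d i) (S z)) :
    (1 - η) * L * ∑ i ∈ range m, μ.real (d i) - 2 * L * μ.real B ≤
      ∑ i ∈ range m, ‖∫ x in d i, F x ∂μ‖ := by
  have hlevel : ∀ i < m,
      (1 - η) * L * μ.real (d i) - 2 * L * μ.real (d i ∩ B) ≤ ‖∫ x in d i, F x ∂μ‖ := by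
    intro i hi
    by_cases hin : ∃ z ∈ Z, d i ⊆ S z
    · obtain ⟨z, hz, hdS⟩ := hin
      refine le_norm_setIntegral hF hFL hη (hZ z hz) hB (Eventually.of_forall fun x hxd hxB => ?_)
      by_contra hfar
      exact hxB (hAS z hz (Or.inr ⟨hdS hxd, fun hxA => hfar (hA z hz x hxA)⟩))
    · push Not at hin
      have hnull : μ (d i \ B) = 0 := by
        refine measure_eq_zero_iff_ae_notMem.2 ?_
        filter_upwards [hcover] with x ⟨z, hz, hxA⟩ ⟨hxd, hxB⟩
        have hxS : x ∉ S z := Set.disjoint_left.1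
          ((hsat z hz i hi).resolve_left (hin z hz)) hxd
        exact hxB (hAS z hz (Or.inl ⟨hxA, hxS⟩))
      have hBd : μ.real (d i ∩ B) = μ.real (d i) := by
        rw [← measureReal_inter_add_sdiff (s := d i) hB, measureReal_def μ (d i \ B), hnull,
          toReal_zero, add_zero]
      rw [hBd]
      nlinarith [norm_nonneg (∫ x in d i, F x ∂μ),
        mul_nonneg hL (measureReal_nonneg (μ := μ) (s := d i))]
  have hB' : ∑ i ∈ range m, μ.real (d i ∩ B) ≤ μ.real B := by
    rw [← measureReal_biUnion_finset _ fun i hi => (hd i (mem_range.1 hi)).inter hB]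
    · exact measureReal_mono (Set.iUnion₂_subset fun _ _ => Set.inter_subset_right)
    · intro i hi j hj hij
      exact (hdisj i j (mem_range.1 hi) (mem_range.1 hj) hij).mono Set.inter_subset_left
        Set.inter_subset_left
  calc (1 - η) * L * ∑ i ∈ range m, μ.real (d i) - 2 * L * μ.real B
      ≤ ∑ i ∈ range m, ((1 - η) * L * μ.real (d i) - 2 * L * μ.real (d i ∩ B)) := by
        rw [sum_sub_distrib, ← mul_sum, ← mul_sum]
        gcongr
    _ ≤ ∑ i ∈ range m, ‖∫ x in d i, F x ∂μ‖ :=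
        sum_le_sum fun i hi => hlevel i (mem_range.1 hi)

theorem eventually_le_sum_norm_setIntegral [ProperSpace E] {d : ℕ → ℕ → Set X} {m : ℕ → ℕ}
    (hF : StronglyMeasurable F) (hL : 0 < L) (hFL : ∀ᵐ x ∂μ, ‖F x‖ = L) (hη : 0 < η)
    (hd : ∀ n, ∀ i < m n, MeasurableSet (d n i))
    (hdisj : ∀ n i j, i < m n → j < m n → i ≠ j → Disjoint (d n i) (d n j))
    (happ : ∀ A, MeasurableSet A → ∀ ε > 0, ∀ᶠ n in atTop, ∃ S, MeasurableSet S ∧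
      (∀ i < m n, d n i ⊆ S ∨ Disjoint (d n i) S) ∧ μ.real (symmDiff A S) < ε)
    {ε : ℝ} (hε : 0 < ε) :
    ∀ᶠ n in atTop, (1 - η) * L * ∑ i ∈ range (m n), μ.real (d n i) - ε ≤
      ∑ i ∈ range (m n), ‖∫ x in d n i, F x ∂μ‖ := by
  have hFL' : ∀ᵐ x ∂μ, ‖F x‖ ≤ L := hFL.mono fun x hx => hx.le
  have hFi : Integrable F μ := .of_bound hF.aestronglyMeasurable L hFL'
  obtain ⟨t, hts, ht, hcov⟩ :=
    finite_cover_balls_of_compact (isCompact_sphere (0 : E) L) (mul_pos hη hL)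
  set Z := ht.toFinset
  set A : E → Set X := fun z => {x | ‖F x - z‖ < η * L}
  have hA : ∀ z, MeasurableSet (A z) := fun z =>
    measurableSet_lt (hF.sub stronglyMeasurable_const).norm.measurable measurable_const
  have hcover : ∀ᵐ x ∂μ, ∃ z ∈ Z, x ∈ A z := by
    filter_upwards [hFL] with x hx
    obtain ⟨z, hz, hxz⟩ := Set.mem_iUnion₂.1 (hcov (mem_sphere_zero_iff_norm.2 hx))
    exact ⟨z, ht.mem_toFinset.2 hz, by simpa [A, dist_eq_norm] using hxz⟩
  -- `ε₀` is chosen so that the `#Z` approximation errors add up to `2 * L * #Z * ε₀ ≤ ε`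
  set ε₀ := ε / (2 * L * (#Z + 1))
  have hε₀ : 0 < ε₀ := by positivity
  filter_upwards [(eventually_all_finset Z).2 fun z _ => happ (A z) (hA z) ε₀ hε₀] with n hn
  choose! S hSm hsat hS using hn
  set B := ⋃ z ∈ Z, symmDiff (A z) (S z)
  have hBm : MeasurableSet B :=
    Finset.measurableSet_biUnion _ fun z hz => (hA z).symmDiff (hSm z hz)
  have hB : 2 * L * μ.real B ≤ ε := by
    have : μ.real B ≤ #Z * ε₀ := (measureReal_biUnion_finset_le _ _).trans <| by
      simpa using sum_le_sum fun z hz => (hS z hz).le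
    calc 2 * L * μ.real B ≤ 2 * L * (#Z * ε₀) := by gcongr
      _ = ε * (#Z / (#Z + 1)) := by simp only [ε₀]; field_simp
      _ ≤ ε := mul_le_of_le_one_right hε.le (div_le_one_of_le₀ (by linarith) (by positivity))
  have := le_sum_norm_setIntegral hFi hL.le hFL' hη.le
    (fun z hz => by simpa using hts (ht.mem_toFinset.1 hz)) hcover
    (fun z _ x hx => le_of_lt hx) hBm
    (fun z hz => Set.subset_biUnion_of_mem (u := fun z => symmDiff (A z) (S z)) hz)
    (hd n) (hdisj n) hsat
  linarith

end Tower

section Eigenvalue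

open Finset

variable {X : Type*} [MeasurableSpace X] {μ : Measure X} [IsFiniteMeasure μ] {T : X → X}
  {F : X → ℂ} {L : ℝ} {c : ℂ}

theorem eventually_norm_pow_sub_one_mul_le (hT : MeasurableEmbedding T) (hF : StronglyMeasurable F)
    (hL : 0 < L) (hFL : ∀ᵐ x ∂μ, ‖F x‖ = L) (hc : ‖c‖ ≤ 1)
    (himg : ∀ s, ∫ x in T '' s, F x ∂μ = c * ∫ x in s, F x ∂μ)
    {d : ℕ → ℕ → Set X} {m : ℕ → ℕ} (hd : ∀ n, ∀ i < m n, MeasurableSet (d n i))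
    (hdisj : ∀ n i j, i < m n → j < m n → i ≠ j → Disjoint (d n i) (d n j))
    (happ : ∀ A, MeasurableSet A → ∀ ε > 0, ∀ᶠ n in atTop, ∃ S, MeasurableSet S ∧
      (∀ i < m n, d n i ⊆ S ∨ Disjoint (d n i) S) ∧ μ.real (symmDiff A S) < ε)
    {r : ℝ} (hr : 0 < r) (hrd : ∀ n, r ≤ ∑ i ∈ range (m n), μ.real (d n i)) :
    ∀ᶠ n in atTop, ‖c ^ m n - 1‖ * r ≤
      6 * m n * ∑ j ∈ range (m n), μ.real (symmDiff (T '' d n j) (d n ((j + 1) % m n))) := by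
  have hFL' : ∀ᵐ x ∂μ, ‖F x‖ ≤ L := hFL.mono fun x hx => hx.le
  have hFi : Integrable F μ := .of_bound hF.aestronglyMeasurable L hFL'
  filter_upwards [eventually_le_sum_norm_setIntegral hF hL hFL (η := 1 / 4) (by norm_num) hd hdisj
    happ (ε := L * r / 4) (by positivity)] with n hn
  have hcyc := norm_pow_sub_one_mul_sum_le hT hFi hFL' hc himg (hd n)
  have hlow : L * r / 2 ≤ ∑ i ∈ range (m n), ‖∫ x in d n i, F x ∂μ‖ := by
    nlinarith [hrd n]
  refine le_of_mul_le_mul_left ?_ (half_pos hL)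
  linear_combination (mul_le_mul_of_nonneg_left hlow (norm_nonneg _)).trans hcyc

theorem eq_one_of_goodApproximationTypeHH1 (hT : MeasurableEmbedding T)
    (happrox : GoodApproximationTypeHH1 μ T) (hF : StronglyMeasurable F) (hL : 0 < L)
    (hFL : ∀ᵐ x ∂μ, ‖F x‖ = L) (hc : ‖c‖ = 1)
    (himg : ∀ s, ∫ x in T '' s, F x ∂μ = c * ∫ x in s, F x ∂μ) : c = 1 := by
  obtain ⟨h, c₁, c₂, r, hr, hpos, -, m₁, m₂, dd₁, dd₂, dd₁₂, em₁, em₂, sub₁, sub₂, happ,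
    hspeed⟩ := happrox
  have happ' : ∀ A : Set X, MeasurableSet A → ∀ ε : ℝ, 0 < ε → ∀ᶠ n in atTop,
      ∃ s₁ s₂ : Finset ℕ, μ.real (symmDiff A ((⋃ i ∈ s₁.filter (· < h n + 1), c₂ n i) ∪
        (⋃ i ∈ s₂.filter (· < h n), c₁ n i))) < ε := fun A hA ε hε =>
    (happ A hA ε hε).mono fun n ⟨s₁, s₂, hs⟩ => ⟨s₂, s₁, by rwa [Set.union_comm] at hs⟩
  have e₁ := eventually_norm_pow_sub_one_mul_le hT hF hL hFL hc.le himg m₁ dd₁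
    (eventually_exists_subset_or_disjoint_approx m₁ m₂ dd₁ dd₁₂ happ) hr fun n => by
      rw [sum_range_measureReal_eq fun i hi => em₁ n i 0 hi (hpos n)]; exact sub₁ n
  have e₂ := eventually_norm_pow_sub_one_mul_le (m := fun n => h n + 1) hT hF hL hFL hc.le himg
    m₂ dd₂ (eventually_exists_subset_or_disjoint_approx m₂ m₁ dd₂
      (fun n i j hi hj => (dd₁₂ n j i hj hi).symm) happ') hr fun n => by
      rw [sum_range_measureReal_eq fun i hi => em₂ n i 0 hi (Nat.succ_pos _)]
      push_cast
      exact sub₂ n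
  set E₁ := fun n => ∑ j ∈ range (h n), μ.real (symmDiff (T '' c₁ n j) (c₁ n ((j + 1) % h n)))
    with hE₁
  set E₂ := fun n =>
    ∑ j ∈ range (h n + 1), μ.real (symmDiff (T '' c₂ n j) (c₂ n ((j + 1) % (h n + 1))))
    with hE₂
  have hbound : ∀ᶠ n in atTop, ‖c - 1‖ * r ≤ 12 * (h n * (E₁ n + E₂ n)) := by
    filter_upwards [e₁, e₂] with n h₁ h₂
    have hn : (1 : ℝ) ≤ h n := Nat.one_le_cast.2 (hpos n)
    have hE₁n : 0 ≤ E₁ n := sum_nonneg fun _ _ => measureReal_nonneg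
    have hE₂n : 0 ≤ E₂ n := sum_nonneg fun _ _ => measureReal_nonneg
    simp only [hE₁, hE₂] at hE₁n hE₂n ⊢
    push_cast at h₂
    have hc₁ :=
      mul_le_mul_of_nonneg_right (norm_sub_one_le_norm_pow_succ_sub_one_add hc (h n)) hr.le
    nlinarith [mul_nonneg hE₁n (by linarith : (0 : ℝ) ≤ h n),
      mul_nonneg hE₂n (by linarith : (0 : ℝ) ≤ h n - 1)]
  have hlim : ‖c - 1‖ * r ≤ 0 := ge_of_tendsto (mul_zero (12 : ℝ) ▸ hspeed.const_mul 12) hbound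
  exact sub_eq_zero.1 (norm_le_zero_iff.1 (nonpos_of_mul_nonpos_left hlim hr))

end Eigenvalue

section Ergodic

variable {X : Type*} [MeasurableSpace X] {μ : Measure X} {T : X → X} {F : X → ℂ} {c : ℂ}

theorem MeasureTheory.MeasurePreserving.setIntegral_image_eq_mul (hT : MeasurePreserving T μ μ)
    (hTe : MeasurableEmbedding T) (hF : (fun x => F (T x)) =ᵐ[μ] fun x => c * F x) (s : Set X) :
    ∫ x in T '' s, F x ∂μ = c * ∫ x in s, F x ∂μ := by
  rw [hT.setIntegral_image_emb hTe, integral_congr_ae (ae_restrict_of_ae hF), integral_const_mul]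

theorem Ergodic.ae_eq_zero_of_integral_eq_zero [IsProbabilityMeasure μ] (hT : Ergodic T μ)
    (hFm : AEStronglyMeasurable F μ) (hF : (fun x => F (T x)) =ᵐ[μ] F) (hint : ∫ x, F x ∂μ = 0) :
    F =ᵐ[μ] 0 := by
  obtain ⟨b, hb⟩ := hT.ae_eq_const_of_ae_eq_comp_ae hFm hF
  have hb0 : b = 0 := by simpa [integral_congr_ae hb] using hint
  exact hb.trans (by rw [hb0]; rfl)

theorem Ergodic.exists_pos_ae_norm_eq (hT : Ergodic T μ) (hFm : AEStronglyMeasurable F μ)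
    (hF : (fun x => F (T x)) =ᵐ[μ] fun x => c * F x) (hc : ‖c‖ = 1) (hF0 : ¬F =ᵐ[μ] 0) :
    ∃ L : ℝ, 0 < L ∧ ∀ᵐ x ∂μ, ‖F x‖ = L := by
  have hinv : (fun x => ‖F x‖) ∘ T =ᵐ[μ] fun x => ‖F x‖ := by
    filter_upwards [hF] with x hx
    simp [Function.comp_apply, hx, hc]
  obtain ⟨L, hL⟩ := hT.ae_eq_const_of_ae_eq_comp_ae hFm.norm hinv
  obtain ⟨x, hx0, hxL⟩ := ((Filter.not_eventually.1 hF0).and_eventually hL).exists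
  exact ⟨L, (norm_pos_iff.2 hx0).trans_eq hxL, hL⟩

end Ergodic

/-- Katok–Stepin: an ergodic transformation admitting a good approximation of type
`(h, h+1)` has continuous spectrum: the Koopman operator has no eigenfunctions in
`L²₀(X,μ)` other than `0`. -/
theorem stmt_11 {X : Type*} [MeasurableSpace X] (μ : Measure X) [IsProbabilityMeasure μ]
    (T S : X → X) (hT : MeasurePreserving T μ μ) (hS : MeasurePreserving S μ μ)
    (hST : Function.LeftInverse S T) (hTS : Function.RightInverse S T)
    (herg : Ergodic T μ)
    (U : Lp ℂ 2 μ ≃ₗᵢ[ℂ] Lp ℂ 2 μ)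
    (hU : ∀ f : Lp ℂ 2 μ, (U f : X → ℂ) =ᵐ[μ] fun x => f (T x))
    (happrox : GoodApproximationTypeHH1 μ T) :
    ∀ (f : Lp ℂ 2 μ) (c : ℂ), U f = c • f → (∫ x, f x ∂μ) = 0 → f = 0 := by
  intro f c hUf hint
  by_contra hf
  have hf0 : ¬(f : X → ℂ) =ᵐ[μ] 0 := fun h => hf ((Lp.eq_zero_iff_ae_eq_zero).2 h)
  have hcomp : (fun x => f (T x)) =ᵐ[μ] fun x => c * f x :=
    (hU f).symm.trans (hUf ▸ Lp.coeFn_smul c f)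
  have hc : ‖c‖ = 1 := by
    have := U.norm_map f
    rwa [hUf, norm_smul, mul_eq_right₀ (norm_ne_zero_iff.2 hf)] at this
  have hc1 : c ≠ 1 := by
    rintro rfl
    exact hf0 (herg.ae_eq_zero_of_integral_eq_zero (Lp.aestronglyMeasurable f)
      (by simpa using hcomp) hint)
  have hTe : MeasurableEmbedding T :=
    (MeasurableEquiv.mk ⟨T, S, hST, hTS⟩ hT.measurable hS.measurable).measurableEmbedding
  obtain ⟨L, hL, hfL⟩ := herg.exists_pos_ae_norm_eq (Lp.aestronglyMeasurable f) hcomp hc hf0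
  exact hc1 (eq_one_of_goodApproximationTypeHH1 hTe happrox (Lp.stronglyMeasurable f) hL hfL hc
    (hT.setIntegral_image_eq_mul hTe hcomp))
end
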